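/- For every feasible fractional solution (x^f_c, x̄^f_c)_{c∈C,f∈F} to (LP-FL)—nonnegative reals with ∑_{f∈F}(x^f_c + x̄^f_c) ≥ 1 for every c ∈ C—there exists an integral feasible solution (z^f_c, z̄^f_c) with values in {0,1} and ∑_{f∈F}(z^f_c + z̄^f_c) ≥ 1 for every c ∈ C, whose (LP-FL) objective value is at most 4 times that of (x, x̄): ∑_{f∈F} o(f)·max_{c∈C} z^f_c + ∑_{f∈F} o(f) ∑_{c∈C} p_c·z̄^f_c + ∑_{c∈C} ∑_{f∈F} p_c·d(c,f)·(z^f_c + z̄^f_c) ≤ 4·( ∑_{f∈F} o(f)·max_{c∈C} x^f_c + ∑_{f∈F} o(f) ∑_{c∈C} p_c·x̄^f_c + ∑_{c∈C} ∑_{f∈F} p_c·d(c,f)·(x^f_c + x̄^f_c) ). -/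

import Mathlib

/-!
Give client `c` the budget `K c = 4 ∑_f (d(c,f) x_cf + (o f + d(c,f)) x̄_cf)`, four times its
fractional renting and connection cost. Markov's inequality at the `1/4`-quantile of the mass
`x_c` shows that either some ball around `c` of radius `r ≤ K c / 3` carries `x_c`-mass at least
`1/4`, or renting the facility minimising `o f + d(c,f)` costs at most `K c`.
Clients of the first kind are clustered greedily by increasing radius into centres with pairwise
disjoint balls. Each centre buys the cheapest facility of its ball, which costs at most
`4 ∑_{f ∈ ball} o f · max_c x_cf`, and every client of the cluster connects to it at distance
`≤ r + 2 r' ≤ 3 r ≤ K c`. Clients of the second kind rent.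
-/

open Finset

section Quantile

variable {ι : Type*} [Fintype ι] {w D : ι → ℝ}

theorem exists_weighted_quantile (hw : ∀ i, 0 ≤ w i) {t : ℝ} (ht : 0 < t)
    (hts : t ≤ ∑ i, w i) :
    ∃ i₀, t ≤ ∑ i with D i ≤ D i₀, w i ∧ ∑ i with D i < D i₀, w i < t := by
  classical
  have hne : (univ.filter fun j => t ≤ ∑ i with D i ≤ D j, w i).Nonempty := by
    obtain ⟨j, -, hj⟩ := exists_max_image univ D (nonempty_of_sum_ne_zero (f := w) (by linarith))
    exact ⟨j, mem_filter.2 ⟨mem_univ j, by rwa [filter_true_of_mem fun i _ => hj i (mem_univ i)]⟩⟩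
  obtain ⟨i₀, hi₀, hmin⟩ := exists_min_image _ D hne
  refine ⟨i₀, (mem_filter.1 hi₀).2, ?_⟩
  by_contra! hbig
  obtain ⟨i₁, hi₁, hmax⟩ := exists_max_image (univ.filter fun i => D i < D i₀) D
    (nonempty_of_sum_ne_zero (f := w) (by linarith))
  have hi₁mem : t ≤ ∑ i with D i ≤ D i₁, w i :=
    hbig.trans (sum_le_sum_of_subset_of_nonneg
      (fun i hi => mem_filter.2 ⟨mem_univ i, hmax i hi⟩) fun i _ _ => hw i)
  exact (mem_filter.1 hi₁).2.not_ge (hmin i₁ (mem_filter.2 ⟨mem_univ i₁, hi₁mem⟩))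

theorem mul_sum_sub_sum_filter_lt_le (hw : ∀ i, 0 ≤ w i) (hD : ∀ i, 0 ≤ D i) (ρ : ℝ) :
    ρ * (∑ i, w i - ∑ i with D i < ρ, w i) ≤ ∑ i, D i * w i := by
  classical
  rw [← sum_filter_add_sum_filter_not univ (fun i => D i < ρ) w, add_sub_cancel_left, mul_sum]
  calc ∑ i with ¬D i < ρ, ρ * w i ≤ ∑ i with ¬D i < ρ, D i * w i :=
        sum_le_sum fun i hi => mul_le_mul_of_nonneg_right (not_lt.1 (mem_filter.1 hi).2) (hw i)
    _ ≤ ∑ i, D i * w i := sum_le_univ_sum_of_nonneg fun i => mul_nonneg (hD i) (hw i)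

end Quantile

theorem exists_quarter_ball_or_cheap_rent {F : Type*} [Fintype F] {w b D o : F → ℝ}
    (hw : ∀ f, 0 ≤ w f) (hb : ∀ f, 0 ≤ b f) (hD : ∀ f, 0 ≤ D f) (ho : ∀ f, 0 ≤ o f)
    (hfeas : 1 ≤ ∑ f, (w f + b f)) :
    (∃ r, 1 / 4 ≤ ∑ f with D f ≤ r, w f ∧
      3 * r ≤ 4 * ∑ f, D f * w f + 4 / 3 * ∑ f, (o f + D f) * b f) ∨
    ∃ g, o g + D g ≤ 4 * ∑ f, D f * w f + 4 / 3 * ∑ f, (o f + D f) * b f := by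
  set R := ∑ f, D f * w f
  obtain ⟨g, -, hg⟩ := exists_min_image univ (fun f => o f + D f)
    (nonempty_of_sum_ne_zero (by linarith : ∑ f, (w f + b f) ≠ 0))
  have hrent : (o g + D g) * ∑ f, b f ≤ ∑ f, (o f + D f) * b f := by
    rw [mul_sum]
    exact sum_le_sum fun f _ => mul_le_mul_of_nonneg_right (hg f (mem_univ f)) (hb f)
  rw [sum_add_distrib] at hfeas
  have hQ : 0 ≤ o g + D g := add_nonneg (ho g) (hD g)
  have hR : 0 ≤ R := sum_nonneg fun f _ => mul_nonneg (hD f) (hw f)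
  have hb1 : 0 ≤ ∑ f, b f := sum_nonneg fun f _ => hb f
  by_cases hs : ∑ f, w f < 1 / 4
  · exact Or.inr ⟨g, by nlinarith⟩
  obtain ⟨i₀, hball, hinner⟩ :=
    exists_weighted_quantile (D := D) hw (by norm_num : (0 : ℝ) < 1 / 4) (not_lt.1 hs)
  have hmarkov : D i₀ * (∑ f, w f - 1 / 4) ≤ R :=
    (mul_le_mul_of_nonneg_left (by linarith) (hD i₀)).trans (mul_sum_sub_sum_filter_lt_le hw hD _)
  rcases le_total (3 * D i₀) (o g + D g) with hle | hle
  · exact Or.inl ⟨D i₀, hball, by nlinarith [hD i₀]⟩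
  · exact Or.inr ⟨g, by nlinarith⟩

section LPCost

variable {C F : Type*} [Fintype F]

def serviceCost (o : F → ℝ) (d : C → F → ℝ) (x xb : C → F → ℝ) (c : C) : ℝ :=
  ∑ f, (d c f * x c f + (o f + d c f) * xb c f)

variable [Fintype C]

noncomputable def lpCost [Nonempty C] (o : F → ℝ) (p : C → ℝ) (d : C → F → ℝ)
    (x xb : C → F → ℝ) : ℝ :=
  ∑ f, o f * univ.sup' univ_nonempty (fun c => x c f) + ∑ f, o f * ∑ c, p c * xb c f +
    ∑ c, ∑ f, p c * d c f * (x c f + xb c f)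

theorem lpCost_eq [Nonempty C] (o : F → ℝ) (p : C → ℝ) (d : C → F → ℝ) (x xb : C → F → ℝ) :
    lpCost o p d x xb = ∑ f, o f * univ.sup' univ_nonempty (fun c => x c f) +
      ∑ c, p c * serviceCost o d x xb c := by
  rw [lpCost, add_assoc]
  congr 1
  simp only [serviceCost, mul_sum]
  rw [sum_comm, ← sum_add_distrib]
  refine sum_congr rfl fun c _ => ?_
  rw [← sum_add_distrib]
  exact sum_congr rfl fun f _ => by ring

end LPCost

theorem exists_quarter_ball_or_cheap_rent_le_serviceCost {C F V : Type*} [Fintype F]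
    [PseudoMetricSpace V] (cl : C → V) (fa : F → V) {o : F → ℝ} (ho : ∀ f, 0 ≤ o f)
    {x xb : C → F → ℝ} (hx : ∀ c f, 0 ≤ x c f) (hxb : ∀ c f, 0 ≤ xb c f) {c : C}
    (hfeas : 1 ≤ ∑ f, (x c f + xb c f)) :
    (∃ r, 1 / 4 ≤ ∑ f with dist (cl c) (fa f) ≤ r, x c f ∧
      3 * r ≤ 4 * serviceCost o (fun c f => dist (cl c) (fa f)) x xb c) ∨
    ∃ g, o g + dist (cl c) (fa g) ≤ 4 * serviceCost o (fun c f => dist (cl c) (fa f)) x xb c := by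
  have hweak : 4 * ∑ f, dist (cl c) (fa f) * x c f +
      4 / 3 * ∑ f, (o f + dist (cl c) (fa f)) * xb c f ≤
        4 * serviceCost o (fun c f => dist (cl c) (fa f)) x xb c := by
    have : 0 ≤ ∑ f, (o f + dist (cl c) (fa f)) * xb c f :=
      sum_nonneg fun f _ => mul_nonneg (add_nonneg (ho f) dist_nonneg) (hxb c f)
    simp only [serviceCost, sum_add_distrib]
    linarith
  exact (exists_quarter_ball_or_cheap_rent (hx c) (hxb c) (fun f => dist_nonneg) ho hfeas).imp
    (fun ⟨r, hr, h3r⟩ => ⟨r, hr, h3r.trans hweak⟩) fun ⟨g, hg⟩ => ⟨g, hg.trans hweak⟩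

theorem exists_disjoint_ball_centers {C F : Type*} [DecidableEq C] [DecidableEq F]
    (r : C → ℝ) (ball : C → Finset F) (A : Finset C) (hA : ∀ c ∈ A, (ball c).Nonempty) :
    ∃ (S : Finset C) (τ : C → C), S ⊆ A ∧ (S : Set C).PairwiseDisjoint ball ∧
      ∀ c ∈ A, τ c ∈ S ∧ r (τ c) ≤ r c ∧ (ball (τ c) ∩ ball c).Nonempty := by
  induction A using Finset.strongInduction with
  | H A ih =>
  rcases A.eq_empty_or_nonempty with rfl | hne
  · exact ⟨∅, id, empty_subset _, by simp, by simp⟩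
  obtain ⟨c₀, hc₀, hmin⟩ := exists_min_image A r hne
  set N := A.filter fun c => (ball c₀ ∩ ball c).Nonempty
  have hc₀N : c₀ ∈ N := mem_filter.2 ⟨hc₀, by rw [inter_self]; exact hA c₀ hc₀⟩
  obtain ⟨S, τ, hSA, hdisj, hτ⟩ := ih (A \ N) (sdiff_ssubset (filter_subset _ _) ⟨c₀, hc₀N⟩)
    fun c hc => hA c (mem_sdiff.1 hc).1
  refine ⟨insert c₀ S, fun c => if c ∈ N then c₀ else τ c,
    insert_subset hc₀ (hSA.trans sdiff_subset), ?_, fun c hc => ?_⟩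
  · rw [coe_insert]
    refine hdisj.insert fun t ht _ => disjoint_iff_inter_eq_empty.2 ?_
    have htN : t ∉ N := (mem_sdiff.1 (hSA ht)).2
    simpa [N, (mem_sdiff.1 (hSA ht)).1, not_nonempty_iff_eq_empty] using htN
  · by_cases hcN : c ∈ N
    · simp only [if_pos hcN]
      exact ⟨mem_insert_self _ _, hmin c hc, (mem_filter.1 hcN).2⟩
    · simp only [if_neg hcN]
      obtain ⟨hS, hr, hmeet⟩ := hτ c (mem_sdiff.2 ⟨hc, hcN⟩)
      exact ⟨mem_insert_of_mem hS, hr, hmeet⟩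

theorem mul_sum_image_cheapest_le {C F : Type*} [Fintype F] [DecidableEq F] {S : Finset C}
    {B : C → Finset F} (hB : (S : Set C).PairwiseDisjoint B) {o y : F → ℝ}
    (ho : ∀ f, 0 ≤ o f) (hy : ∀ f, 0 ≤ y f) {w : C → F → ℝ} (hw : ∀ s f, 0 ≤ w s f)
    (hwy : ∀ s f, w s f ≤ y f) {t : ℝ} (ht : 0 ≤ t) (hmass : ∀ s ∈ S, t ≤ ∑ f ∈ B s, w s f)
    {b : C → F} (hb : ∀ s ∈ S, ∀ f ∈ B s, o (b s) ≤ o f) :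
    t * ∑ f ∈ S.image b, o f ≤ ∑ f, o f * y f := by
  calc t * ∑ f ∈ S.image b, o f ≤ ∑ s ∈ S, t * o (b s) := by
        rw [← mul_sum]
        exact mul_le_mul_of_nonneg_left (sum_image_le_of_nonneg fun f _ => ho f) ht
    _ ≤ ∑ s ∈ S, ∑ f ∈ B s, o f * y f := sum_le_sum fun s hs =>
      calc t * o (b s) ≤ (∑ f ∈ B s, w s f) * o (b s) :=
            mul_le_mul_of_nonneg_right (hmass s hs) (ho _)
        _ ≤ ∑ f ∈ B s, o f * y f := by
          rw [sum_mul]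
          exact sum_le_sum fun f hf => by
            nlinarith [hb s hs f hf, hw s f, hwy s f, ho f, ho (b s)]
    _ = ∑ f ∈ S.biUnion B, o f * y f := (sum_biUnion hB).symm
    _ ≤ ∑ f, o f * y f := sum_le_univ_sum_of_nonneg fun f => mul_nonneg (ho f) (hy f)

theorem dist_le_of_balls_meet {V : Type*} [PseudoMetricSpace V] {c t g h : V} {r₁ r₂ : ℝ}
    (hcg : dist c g ≤ r₁) (htg : dist t g ≤ r₂) (hth : dist t h ≤ r₂) :
    dist c h ≤ r₁ + 2 * r₂ := by
  have := dist_triangle4 c g t h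
  rw [dist_comm g t] at this
  linarith

theorem exists_buy_rent_assignment {C F V : Type*} [Fintype C] [Fintype F] [Nonempty F]
    [DecidableEq C] [DecidableEq F] [PseudoMetricSpace V] (cl : C → V) (fa : F → V)
    {o : F → ℝ} (ho : ∀ f, 0 ≤ o f)
    {x : C → F → ℝ} (hx : ∀ c f, 0 ≤ x c f) {y : F → ℝ} (hy : ∀ f, 0 ≤ y f)
    (hxy : ∀ c f, x c f ≤ y f) {K : C → ℝ}
    (hK : ∀ c, (∃ r, 1 / 4 ≤ ∑ f with dist (cl c) (fa f) ≤ r, x c f ∧ 3 * r ≤ K c) ∨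
      ∃ g, o g + dist (cl c) (fa g) ≤ K c) :
    ∃ (A : Finset C) (a : C → F), ∑ f ∈ A.image a, o f ≤ 4 * ∑ f, o f * y f ∧
      ∀ c, dist (cl c) (fa (a c)) + (if c ∈ A then 0 else o (a c)) ≤ K c := by
  classical
  set A := univ.filter fun c => ∃ r, 1 / 4 ≤ ∑ f with dist (cl c) (fa f) ≤ r, x c f ∧ 3 * r ≤ K c
  choose! r hr using fun c (hc : c ∈ A) => (mem_filter.1 hc).2
  choose! g hg using fun c (hc : c ∉ A) =>
    (hK c).resolve_left fun h => hc (mem_filter.2 ⟨mem_univ c, h⟩)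
  set ball : C → Finset F := fun c => univ.filter fun f => dist (cl c) (fa f) ≤ r c
  have hball : ∀ c ∈ A, (ball c).Nonempty := fun c hc =>
    nonempty_of_sum_ne_zero (f := x c) (by linarith [(hr c hc).1])
  obtain ⟨S, τ, hSA, hdisj, hτ⟩ := exists_disjoint_ball_centers r ball A hball
  choose! b hb using fun s (hs : s ∈ A) => exists_min_image (ball s) o (hball s hs)
  refine ⟨A, fun c => if c ∈ A then b (τ c) else g c, ?_, fun c => ?_⟩
  · have hsub : A.image (fun c => if c ∈ A then b (τ c) else g c) ⊆ S.image b := by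
      intro f hf
      obtain ⟨c, hc, rfl⟩ := mem_image.1 hf
      exact mem_image.2 ⟨τ c, (hτ c hc).1, (if_pos hc).symm⟩
    have := mul_sum_image_cheapest_le hdisj ho hy hx hxy (by norm_num : (0 : ℝ) ≤ 1 / 4)
      (fun s hs => (hr s (hSA hs)).1) fun s hs => (hb s (hSA hs)).2
    linarith [sum_le_sum_of_subset_of_nonneg hsub fun f _ _ => ho f]
  · by_cases hc : c ∈ A
    · simp only [if_pos hc]
      obtain ⟨hτS, hrτ, f, hf⟩ := hτ c hc
      simp only [ball, mem_inter, mem_filter, mem_univ, true_and] at hf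
      have := dist_le_of_balls_meet hf.2 hf.1 (mem_filter.1 (hb _ (hSA hτS)).1).2
      linarith [(hr c hc).2]
    · simp only [if_neg hc]
      linarith [hg c hc]


section Rounding

variable {C F : Type*} [DecidableEq C] [DecidableEq F] (A : Finset C) (a : C → F)

def buyIndicator (c : C) (f : F) : ℝ := if c ∈ A ∧ a c = f then 1 else 0

def rentIndicator (c : C) (f : F) : ℝ := if c ∉ A ∧ a c = f then 1 else 0

theorem buyIndicator_eq_zero_or_one (c : C) (f : F) :
    buyIndicator A a c f = 0 ∨ buyIndicator A a c f = 1 := by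
  unfold buyIndicator; split_ifs <;> simp

theorem rentIndicator_eq_zero_or_one (c : C) (f : F) :
    rentIndicator A a c f = 0 ∨ rentIndicator A a c f = 1 := by
  unfold rentIndicator; split_ifs <;> simp

theorem sum_buyIndicator_add_rentIndicator [Fintype F] (c : C) :
    ∑ f, (buyIndicator A a c f + rentIndicator A a c f) = 1 := by
  by_cases hc : c ∈ A <;> simp [buyIndicator, rentIndicator, hc]

theorem serviceCost_indicator [Fintype F] (o : F → ℝ) (d : C → F → ℝ) (c : C) :
    serviceCost o d (buyIndicator A a) (rentIndicator A a) c =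
      d c (a c) + if c ∈ A then 0 else o (a c) := by
  by_cases hc : c ∈ A
  · simp [serviceCost, buyIndicator, rentIndicator, hc]
  · simp [serviceCost, buyIndicator, rentIndicator, hc, add_comm]

theorem sup'_buyIndicator_le [Fintype C] [Nonempty C] (f : F) :
    univ.sup' univ_nonempty (fun c => buyIndicator A a c f) ≤ if f ∈ A.image a then 1 else 0 := by
  refine sup'_le _ _ fun c _ => ?_
  by_cases hc : c ∈ A ∧ a c = f
  · rw [buyIndicator, if_pos hc, if_pos (mem_image.2 ⟨c, hc.1, hc.2⟩)]
  · rw [buyIndicator, if_neg hc]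
    split_ifs <;> norm_num

theorem lpCost_indicator_le [Fintype C] [Fintype F] [Nonempty C] {o : F → ℝ}
    (ho : ∀ f, 0 ≤ o f) (p : C → ℝ) (d : C → F → ℝ) :
    lpCost o p d (buyIndicator A a) (rentIndicator A a) ≤
      ∑ f ∈ A.image a, o f + ∑ c, p c * (d c (a c) + if c ∈ A then 0 else o (a c)) := by
  rw [lpCost_eq]
  simp only [serviceCost_indicator]
  gcongr
  calc ∑ f, o f * univ.sup' univ_nonempty (fun c => buyIndicator A a c f)
      ≤ ∑ f, o f * if f ∈ A.image a then 1 else 0 :=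
        sum_le_sum fun f _ => mul_le_mul_of_nonneg_left (sup'_buyIndicator_le A a f) (ho f)
    _ = ∑ f ∈ A.image a, o f := by simp only [mul_ite, mul_one, mul_zero, sum_ite_mem, univ_inter]

end Rounding

theorem stmt14_general {C F V : Type*} [Fintype C] [Fintype F] [Nonempty C] [MetricSpace V]
    (cl : C → V) (fa : F → V)
    (o : F → ℝ) (ho : ∀ f, 0 ≤ o f)
    (p : C → ℝ) (hp0 : ∀ c, 0 ≤ p c)
    (x xb : C → F → ℝ) (hx : ∀ c f, 0 ≤ x c f) (hxb : ∀ c f, 0 ≤ xb c f)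
    (hfeas : ∀ c : C, 1 ≤ ∑ f : F, (x c f + xb c f)) :
    ∃ z zb : C → F → ℝ,
      (∀ c f, z c f = 0 ∨ z c f = 1) ∧ (∀ c f, zb c f = 0 ∨ zb c f = 1) ∧
      (∀ c : C, 1 ≤ ∑ f : F, (z c f + zb c f)) ∧
      ∑ f : F, o f * (Finset.univ.sup' Finset.univ_nonempty fun c : C => z c f) +
          ∑ f : F, o f * ∑ c : C, p c * zb c f +
          ∑ c : C, ∑ f : F, p c * dist (cl c) (fa f) * (z c f + zb c f) ≤
        4 * (∑ f : F, o f * (Finset.univ.sup' Finset.univ_nonempty fun c : C => x c f) +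
          ∑ f : F, o f * ∑ c : C, p c * xb c f +
          ∑ c : C, ∑ f : F, p c * dist (cl c) (fa f) * (x c f + xb c f)) := by
  classical
  set d : C → F → ℝ := fun c f => dist (cl c) (fa f)
  set y : F → ℝ := fun f => univ.sup' univ_nonempty fun c => x c f
  have : Nonempty F := (univ_nonempty_iff.1 <| nonempty_of_sum_ne_zero
    (by linarith [hfeas (Classical.arbitrary C)] : ∑ f, (x _ f + xb _ f) ≠ 0))
  have hxy : ∀ c f, x c f ≤ y f := fun c f => le_sup' (fun c => x c f) (mem_univ c)
  obtain ⟨A, a, hopen, hclient⟩ := exists_buy_rent_assignment cl fa ho hx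
    (fun f => (hx (Classical.arbitrary C) f).trans (hxy _ f)) hxy
    fun c => exists_quarter_ball_or_cheap_rent_le_serviceCost cl fa ho hx hxb (hfeas c)
  refine ⟨buyIndicator A a, rentIndicator A a, buyIndicator_eq_zero_or_one A a,
    rentIndicator_eq_zero_or_one A a,
    fun c => (sum_buyIndicator_add_rentIndicator A a c).ge, ?_⟩
  show lpCost o p d _ _ ≤ 4 * lpCost o p d x xb
  calc lpCost o p d (buyIndicator A a) (rentIndicator A a)
      ≤ ∑ f ∈ A.image a, o f + ∑ c, p c * (d c (a c) + if c ∈ A then 0 else o (a c)) :=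
        lpCost_indicator_le A a ho p d
    _ ≤ 4 * ∑ f, o f * y f + ∑ c, p c * (4 * serviceCost o d x xb c) :=
        add_le_add hopen (sum_le_sum fun c _ => mul_le_mul_of_nonneg_left (hclient c) (hp0 c))
    _ = 4 * lpCost o p d x xb := by
        rw [lpCost_eq, mul_add, mul_sum, mul_sum]
        simp only [y, mul_left_comm]

/-- Rounding the rent-or-buy LP (LP-FL) for universal stochastic metric facility location
to an integral solution losing at most a factor 4. The metric is induced by embedding
clients and facilities in a metric space `V`, with `d(c,f) = dist (cl c) (fa f)`. -/
theorem stmt14 {C F V : Type*} [Fintype C] [Fintype F] [Nonempty C] [MetricSpace V]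
    (cl : C → V) (fa : F → V)
    (o : F → ℝ) (ho : ∀ f, 0 ≤ o f)
    (p : C → ℝ) (hp0 : ∀ c, 0 ≤ p c) (hp1 : ∀ c, p c ≤ 1)
    (x xb : C → F → ℝ) (hx : ∀ c f, 0 ≤ x c f) (hxb : ∀ c f, 0 ≤ xb c f)
    (hfeas : ∀ c : C, 1 ≤ ∑ f : F, (x c f + xb c f)) :
    ∃ z zb : C → F → ℝ,
      (∀ c f, z c f = 0 ∨ z c f = 1) ∧ (∀ c f, zb c f = 0 ∨ zb c f = 1) ∧
      (∀ c : C, 1 ≤ ∑ f : F, (z c f + zb c f)) ∧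
      ∑ f : F, o f * (Finset.univ.sup' Finset.univ_nonempty fun c : C => z c f) +
          ∑ f : F, o f * ∑ c : C, p c * zb c f +
          ∑ c : C, ∑ f : F, p c * dist (cl c) (fa f) * (z c f + zb c f) ≤
        4 * (∑ f : F, o f * (Finset.univ.sup' Finset.univ_nonempty fun c : C => x c f) +
          ∑ f : F, o f * ∑ c : C, p c * xb c f +
          ∑ c : C, ∑ f : F, p c * dist (cl c) (fa f) * (x c f + xb c f)) :=
  stmt14_general cl fa o ho p hp0 x xb hx hxb hfeas
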